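/- Let n ≥ 1, k ≥ 2 and 0 ≤ a ≤ (k−1)n be natural numbers, and let M(a) be the number of ordered k-tuples (σ_1,…,σ_k) of permutations of [n] such that |∪_{t=1}^k graph(σ_t)| = kn − a. Then M(a) ≤ (n!)^k · (k(k−1)/2)^a / a!. -/

import Mathlib

/-!
Write `defect σ = k n - |⋃ₜ graph σₜ|` for a `k`-tuple `σ` of permutations of an `n`-set.
Prepending a permutation `τ` to `σ` raises the defect by `|graph τ ∩ U|`, where `U` is the union of
the graphs of `σ`, a set with at most `k` points in each row. For any `U` with at most `m` points per
row, at most `n! m^d / d!` permutations meet `U` in exactly `d` points: choose the `d` rows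
(`C(n, d)` ways), the values there (at most `m^d`), and the remaining values (`(n - d)!`).
The bound then follows by induction on `k`: the binomial theorem combines the two factors, and
`C(k, 2) + k = C(k+1, 2)`, where `C(k, 2) = k(k-1)/2`.
-/

/-- `M(a)`: the number of ordered `k`-tuples of permutations of `[n]` the union of whose
graphs has exactly `k·n - a` elements. -/
def Mcount (n k a : ℕ) : ℕ :=
  (Finset.univ.filter (fun σ : Fin k → Equiv.Perm (Fin n) =>
    (Finset.univ.biUnion
      (fun t : Fin k => Finset.univ.image (fun i : Fin n => (i, σ t i)))).card = k * n - a)).card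

open Finset Equiv
open scoped Nat

variable {α : Type*} [Fintype α] [DecidableEq α]

def permGraph (τ : Perm α) : Finset (α × α) := univ.image fun i => (i, τ i)

def graphUnion {ι : Type*} [Fintype ι] (σ : ι → Perm α) : Finset (α × α) :=
  univ.biUnion fun t => permGraph (σ t)

def defect {k : ℕ} (σ : Fin k → Perm α) : ℕ := k * Fintype.card α - #(graphUnion σ)

theorem card_permGraph (τ : Perm α) : #(permGraph τ) = Fintype.card α :=
  card_image_of_injective _ fun _ _ h => (Prod.ext_iff.1 h).1

theorem card_permGraph_inter (τ : Perm α) (U : Finset (α × α)) :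
    #(permGraph τ ∩ U) = #{i | (i, τ i) ∈ U} := by
  rw [← filter_mem_eq_inter, permGraph, filter_image]
  exact card_image_of_injective _ fun _ _ h => (Prod.ext_iff.1 h).1

theorem card_perm_forall_eq (τ₀ : Perm α) (I : Finset α) :
    #{τ : Perm α | ∀ i ∈ I, τ i = τ₀ i} = (Fintype.card α - #I)! := by
  calc #{τ : Perm α | ∀ i ∈ I, τ i = τ₀ i} = #{τ : Perm α | ∀ i ∈ I, τ i = i} := by
        refine card_bij' (fun τ _ => τ₀⁻¹ * τ) (fun τ _ => τ₀ * τ) ?_ ?_ ?_ ?_ <;>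
          simp +contextual
    _ = Fintype.card {τ : Perm α // ∀ i, ¬ i ∉ I → τ i = i} := by
        rw [Fintype.card_subtype]; simp
    _ = (Fintype.card α - #I)! := by
        rw [← Fintype.card_congr (Perm.subtypeEquivSubtypePerm _), Fintype.card_perm]
        simp [Fintype.card_subtype_compl]

theorem card_perm_forall_mem_le (U : Finset (α × α)) (m : ℕ)
    (hU : ∀ i, #{j | (i, j) ∈ U} ≤ m) (I : Finset α) :
    #{τ : Perm α | ∀ i ∈ I, (i, τ i) ∈ U} ≤ (Fintype.card α - #I)! * m ^ #I := by
  set s := ({τ : Perm α | ∀ i ∈ I, (i, τ i) ∈ U} : Finset (Perm α))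
  let restrict : Perm α → (I → α) := fun τ i => τ i
  have hfiber : ∀ g ∈ s.image restrict, #{τ ∈ s | restrict τ = g} ≤ (Fintype.card α - #I)! := by
    rintro _ hg
    obtain ⟨τ₀, -, rfl⟩ := mem_image.1 hg
    rw [← card_perm_forall_eq τ₀ I]
    refine card_le_card fun τ hτ => ?_
    simp only [mem_filter, mem_univ, true_and] at hτ ⊢
    exact fun i hi => congrFun hτ.2 ⟨i, hi⟩
  have himage : s.image restrict ⊆ Fintype.piFinset fun i : I => {j | (i.1, j) ∈ U} := by
    intro g hg
    obtain ⟨τ, hτ, rfl⟩ := mem_image.1 hg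
    simp only [s, mem_filter, mem_univ, true_and] at hτ
    simpa [restrict] using fun i hi => hτ i hi
  calc #s ≤ (Fintype.card α - #I)! * #(s.image restrict) := card_le_mul_card_image s _ hfiber
    _ ≤ (Fintype.card α - #I)! * m ^ #I := by
      gcongr
      calc #(s.image restrict) ≤ ∏ i : I, #{j | (i.1, j) ∈ U} := by
            simpa using card_le_card himage
        _ ≤ m ^ #I := by
            simpa using prod_le_pow_card (univ : Finset I) (fun i => #{j | (i.1, j) ∈ U}) m
              fun i _ => hU i

theorem card_perm_card_permGraph_inter_mul_factorial_le (U : Finset (α × α)) (m : ℕ)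
    (hU : ∀ i, #{j | (i, j) ∈ U} ≤ m) (d : ℕ) :
    #{τ : Perm α | #(permGraph τ ∩ U) = d} * d ! ≤ (Fintype.card α)! * m ^ d := by
  set n := Fintype.card α
  have hcover : ({τ : Perm α | #(permGraph τ ∩ U) = d} : Finset _) ⊆
      (powersetCard d univ).biUnion fun I => {τ : Perm α | ∀ i ∈ I, (i, τ i) ∈ U} := by
    intro τ hτ
    simp only [mem_filter, mem_univ, true_and, card_permGraph_inter] at hτ
    simp only [mem_biUnion, mem_powersetCard, mem_filter, mem_univ, true_and]
    exact ⟨({i | (i, τ i) ∈ U} : Finset α), ⟨subset_univ _, hτ⟩, fun i hi => (mem_filter.1 hi).2⟩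
  calc #{τ : Perm α | #(permGraph τ ∩ U) = d} * d !
      ≤ (∑ I ∈ powersetCard d univ, #{τ : Perm α | ∀ i ∈ I, (i, τ i) ∈ U}) * d ! := by
        gcongr
        exact (card_le_card hcover).trans card_biUnion_le
    _ ≤ (∑ _I ∈ powersetCard d (univ : Finset α), (n - d)! * m ^ d) * d ! := by
        gcongr with I hI
        rw [← (mem_powersetCard.1 hI).2]
        exact card_perm_forall_mem_le U m hU I
    _ = n.choose d * d ! * (n - d)! * m ^ d := by
        rw [sum_const, card_powersetCard, Finset.card_univ, smul_eq_mul]; ring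
    _ ≤ n ! * m ^ d := by
        gcongr
        rcases le_or_gt d n with hd | hd
        · rw [Nat.choose_mul_factorial_mul_factorial hd]
        · simp [Nat.choose_eq_zero_of_lt hd]

theorem card_graphUnion_le {ι : Type*} [Fintype ι] (σ : ι → Perm α) :
    #(graphUnion σ) ≤ Fintype.card ι * Fintype.card α :=
  card_biUnion_le.trans_eq (by simp [card_permGraph])

theorem card_row_graphUnion_le {ι : Type*} [Fintype ι] (σ : ι → Perm α) (i : α) :
    #{j | (i, j) ∈ graphUnion σ} ≤ Fintype.card ι := by
  calc #{j | (i, j) ∈ graphUnion σ} ≤ #(univ.image fun t => σ t i) :=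
        card_le_card fun j => by simp [graphUnion, permGraph, eq_comm]
    _ ≤ Fintype.card ι := card_image_le

theorem graphUnion_cons {k : ℕ} (τ : Perm α) (σ : Fin k → Perm α) :
    graphUnion (Fin.cons τ σ : Fin (k + 1) → Perm α) = permGraph τ ∪ graphUnion σ := by
  ext
  simp [graphUnion, Fin.exists_fin_succ]

theorem defect_cons {k : ℕ} (τ : Perm α) (σ : Fin k → Perm α) :
    defect (Fin.cons τ σ : Fin (k + 1) → Perm α) = defect σ + #(permGraph τ ∩ graphUnion σ) := by
  have hunion := card_union_add_card_inter (permGraph τ) (graphUnion σ)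
  have hinter := card_le_card (inter_subset_right (s₁ := permGraph τ) (s₂ := graphUnion σ))
  have hle := card_graphUnion_le σ
  rw [card_permGraph] at hunion
  rw [Fintype.card_fin] at hle
  rw [defect, defect, graphUnion_cons, add_mul]
  omega

theorem card_defect_succ (k a : ℕ) :
    #{x : Fin (k + 1) → Perm α | defect x = a} =
      ∑ b ∈ range (a + 1), ∑ σ : Fin k → Perm α with defect σ = b,
        #{τ : Perm α | #(permGraph τ ∩ graphUnion σ) = a - b} := by
  set hits := fun (τ : Perm α) (σ : Fin k → Perm α) => #(permGraph τ ∩ graphUnion σ)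
  calc #{x : Fin (k + 1) → Perm α | defect x = a}
      = #{p : Perm α × (Fin k → Perm α) | defect p.2 + hits p.1 p.2 = a} := by
        refine (card_equiv (Fin.consEquiv _) fun p => ?_).symm
        simp only [mem_filter, mem_univ, true_and]
        change _ ↔ defect (Fin.cons p.1 p.2 : Fin (k + 1) → Perm α) = a
        rw [defect_cons]
    _ = ∑ b ∈ range (a + 1),
          #{p : Perm α × (Fin k → Perm α) | defect p.2 = b ∧ hits p.1 p.2 = a - b} := by
        rw [card_eq_sum_card_fiberwise (f := fun p => defect p.2) (t := range (a + 1))]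
        · refine sum_congr rfl fun b hb => ?_
          rw [filter_filter, mem_range] at *
          exact congrArg card (filter_congr fun p _ => by omega)
        · intro p hp
          rw [mem_coe, mem_filter] at hp
          rw [mem_coe, mem_range]
          show defect p.2 < a + 1
          omega
    _ = _ := by
        refine sum_congr rfl fun b _ => ?_
        rw [card_filter, Fintype.sum_prod_type_right, sum_filter]
        refine sum_congr rfl fun σ _ => ?_
        split_ifs with h
        · simp only [h, true_and, hits, card_filter]
        · simp [h]

theorem sum_card_permGraph_inter_mul_factorial_le {k : ℕ} (b a : ℕ) (hb : b ≤ a) :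
    (∑ σ : Fin k → Perm α with defect σ = b,
        #{τ : Perm α | #(permGraph τ ∩ graphUnion σ) = a - b}) * a ! ≤
      a.choose b * (#{σ : Fin k → Perm α | defect σ = b} * b ! *
        ((Fintype.card α)! * k ^ (a - b))) := by
  calc _ = a.choose b * b ! * ∑ σ : Fin k → Perm α with defect σ = b,
          #{τ : Perm α | #(permGraph τ ∩ graphUnion σ) = a - b} * (a - b)! := by
        rw [← Nat.choose_mul_factorial_mul_factorial hb, sum_mul, mul_sum]
        exact sum_congr rfl fun _ _ => by ring
    _ ≤ a.choose b * b ! * ∑ σ : Fin k → Perm α with defect σ = b,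
          (Fintype.card α)! * k ^ (a - b) := by
        refine Nat.mul_le_mul_left _ (sum_le_sum fun σ _ => ?_)
        exact card_perm_card_permGraph_inter_mul_factorial_le (graphUnion σ) k
          (fun i => (card_row_graphUnion_le σ i).trans_eq (Fintype.card_fin k)) (a - b)
    _ = _ := by rw [sum_const, smul_eq_mul]; ring

theorem card_defect_mul_factorial_le (k a : ℕ) :
    #{σ : Fin k → Perm α | defect σ = a} * a ! ≤ (Fintype.card α)! ^ k * k.choose 2 ^ a := by
  induction k generalizing a with
  | zero => cases a <;> simp [defect]
  | succ k ih =>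
    set n := Fintype.card α
    calc #{σ : Fin (k + 1) → Perm α | defect σ = a} * a !
        ≤ ∑ b ∈ range (a + 1), a.choose b * (#{σ : Fin k → Perm α | defect σ = b} * b ! *
            (n ! * k ^ (a - b))) := by
          rw [card_defect_succ, sum_mul]
          exact sum_le_sum fun b hb =>
            sum_card_permGraph_inter_mul_factorial_le b a (Nat.lt_succ_iff.1 (mem_range.1 hb))
      _ ≤ ∑ b ∈ range (a + 1), a.choose b * (n ! ^ k * k.choose 2 ^ b * (n ! * k ^ (a - b))) :=
          sum_le_sum fun b _ => Nat.mul_le_mul_left _ (Nat.mul_le_mul_right _ (ih b))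
      _ = n ! ^ (k + 1) * (k.choose 2 + k) ^ a := by
          rw [add_pow, mul_sum]
          exact sum_congr rfl fun b _ => by rw [Nat.cast_id]; ring
      _ = n ! ^ (k + 1) * (k + 1).choose 2 ^ a := by
          rw [Nat.choose_succ_succ' k 1, Nat.choose_one_right, add_comm k (k.choose (1 + 1))]

theorem Mcount_eq_card_defect {n k a : ℕ} (ha : a ≤ k * n) :
    Mcount n k a = #{σ : Fin k → Perm (Fin n) | defect σ = a} := by
  refine congrArg card (filter_congr fun σ _ => ?_)
  have := card_graphUnion_le σ
  rw [Fintype.card_fin, Fintype.card_fin] at this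
  rw [defect, Fintype.card_fin]
  change #(graphUnion σ) = k * n - a ↔ k * n - #(graphUnion σ) = a
  omega

theorem Mcount_le_general (n k a : ℕ) (ha : a ≤ (k - 1) * n) :
    (Mcount n k a : ℝ)
      ≤ (Nat.factorial n : ℝ) ^ k * ((k : ℝ) * ((k : ℝ) - 1) / 2) ^ a
          / (Nat.factorial a : ℝ) := by
  have hkn : a ≤ k * n := ha.trans (Nat.mul_le_mul_right n (Nat.sub_le k 1))
  have key := card_defect_mul_factorial_le (α := Fin n) k a
  rw [Fintype.card_fin, ← Mcount_eq_card_defect hkn] at key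
  rw [← Nat.cast_choose_two, le_div_iff₀ (by positivity)]
  exact_mod_cast key

/-- For `n ≥ 1`, `k ≥ 2` and `0 ≤ a ≤ (k-1)n`, `M(a) ≤ (n!)^k (k(k-1)/2)^a / a!`. -/
theorem Mcount_le (n k a : ℕ) (hn : 1 ≤ n) (hk : 2 ≤ k) (ha : a ≤ (k - 1) * n) :
    (Mcount n k a : ℝ)
      ≤ (Nat.factorial n : ℝ) ^ k * ((k : ℝ) * ((k : ℝ) - 1) / 2) ^ a
          / (Nat.factorial a : ℝ) :=
  Mcount_le_general n k a ha
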